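/- arXiv:1203.1709 — 3 statements merged into one kernel-verified Lean document; each statement's English description precedes it below -/
import Mathlib

section
/- In any weak Courant-Dorfman algebra, axioms (1)-(3) imply the weakened invariance axiom: ∂(⟨f, ∂⟨g,h⟩⟩ − ⟨⟦f,g⟧, h⟩ − ⟨g, ⟦f,h⟧⟩) = 0 for all f, g, h ∈ V. -/
/-! By (2) and (3), `∂⟨f, ∂a⟩ = ⟦f, ∂a⟧ + ⟦∂a, f⟧ = ⟦f, ∂a⟧`, so the first term is
`⟦f, ⟦g,h⟧⟧ + ⟦f, ⟦h,g⟧⟧`. Expanding the other two terms by (2) and the first one by the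
Leibniz rule (1), everything cancels. -/

section

variable {k V R : Type*} [CommSemiring k] [AddCommGroup V] [Module k V] [AddCommGroup R]
  [Module k R] {pair : V →ₗ[k] V →ₗ[k] R} {br : V →ₗ[k] V →ₗ[k] V} {del : R →ₗ[k] V}

theorem del_pair_del_eq_br (ax2 : ∀ f g : V, br f g + br g f = del (pair f g))
    (ax3 : ∀ (a : R) (f : V), br (del a) f = 0) (f : V) (a : R) :
    del (pair f (del a)) = br f (del a) := by
  rw [← ax2, ax3, add_zero]

theorem del_pair_del_pair_eq (ax2 : ∀ f g : V, br f g + br g f = del (pair f g))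
    (ax3 : ∀ (a : R) (f : V), br (del a) f = 0) (f g h : V) :
    del (pair f (del (pair g h))) = br f (br g h) + br f (br h g) := by
  rw [del_pair_del_eq_br ax2 ax3, ← ax2, map_add]

end

theorem stmt3_general
    (V R : Type*) [AddCommGroup V] [Module ℝ V] [AddCommGroup R] [Module ℝ R]
    (pair : V →ₗ[ℝ] V →ₗ[ℝ] R) (br : V →ₗ[ℝ] V →ₗ[ℝ] V) (del : R →ₗ[ℝ] V)
    (ax1 : ∀ f g h : V, br f (br g h) = br (br f g) h + br g (br f h))
    (ax2 : ∀ f g : V, br f g + br g f = del (pair f g))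
    (ax3 : ∀ (a : R) (f : V), br (del a) f = 0) :
    ∀ f g h : V,
      del (pair f (del (pair g h)) - pair (br f g) h - pair g (br f h)) = 0 := by
  intro f g h
  rw [map_sub, map_sub, del_pair_del_pair_eq ax2 ax3, ← ax2, ← ax2, ax1 f g h, ax1 f h g]
  abel

theorem stmt3
    (V R : Type*) [AddCommGroup V] [Module ℝ V] [AddCommGroup R] [Module ℝ R]
    (pair : V →ₗ[ℝ] V →ₗ[ℝ] R) (br : V →ₗ[ℝ] V →ₗ[ℝ] V) (del : R →ₗ[ℝ] V)
    (hsymm : ∀ f g : V, pair f g = pair g f)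
    (ax1 : ∀ f g h : V, br f (br g h) = br (br f g) h + br g (br f h))
    (ax2 : ∀ f g : V, br f g + br g f = del (pair f g))
    (ax3 : ∀ (a : R) (f : V), br (del a) f = 0) :
    ∀ f g h : V,
      del (pair f (del (pair g h)) - pair (br f g) h - pair g (br f h)) = 0 :=
  stmt3_general V R pair br del ax1 ax2 ax3
end

section
/- Let R be a Lie conformal algebra over R with λ-bracket [·_λ·]. Then the bracket [a,b] := ∫_{−∂}^{0} [a_λ b] dλ (meaning: if [a_λ b] = Σ_j c_j λ^j/j! then [a,b] = −Σ_j (−∂)^{j+1} c_j/(j+1)!) makes the underlying vector space R into a Lie algebra: it is bilinear, skew-symmetric, and satisfies the Jacobi identity. -/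
/-!
Write `T = -∂`, so that `[a, b] = -∑ⱼ T^(j+1)/(j+1)! · a₍ⱼ₎b`. All products `a₍ⱼ₎b` vanish for large
`j`, so any finitely many of the sums below can be truncated at one common bound.

Skew-symmetry: substituting `[a_λ b] = -[b_{-∂-λ} a]` writes `[a, b]` as a double sum; collected
along antidiagonals it has coefficients `∑ₖ (-1)^k / ((k+1)! (t-k)!) = 1/(t+1)!`, i.e. it is
`-[b, a]`.

Jacobi identity: sesquilinearity gives `[a_λ T^k b] = (T - λ)^k [a_λ b]` and
`[T^k a_λ b] = λ^k [a_λ b]`, whence the normal forms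
  `[a, [b, c]] = ∑ T^(m+n+2)/(m+n+2)! · a₍ₘ₎(b₍ₙ₎c)`,
  `[[a, b], c] = ∑ C(t+m+1, m+1) T^(t+m+2)/(t+m+2)! · (a₍ₘ₎b)₍ₜ₎c`,
the first by the Beta integral `∑ᵢ (-1)^i C(k,i)/(s+i+1) = s! k!/(s+k+1)!`. The conformal Jacobi
identity splits the first normal form into that of `[b, [a, c]]` and a sum which the hockey-stick
identity `∑ₖ C(j+k, j) = C(t+j+1, j+1)` turns into that of `[[a, b], c]`.
-/

open Finset Filter
open scoped Nat

section Combinatorics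

theorem sum_range_neg_one_pow_mul_choose_succ {R M : Type*} [Ring R] [AddCommGroup M] [Module R M]
    (g : ℕ → M) (k : ℕ) :
    ∑ i ∈ range (k + 2), ((-1 : R) ^ i * (k + 1).choose i) • g i =
      ∑ i ∈ range (k + 1), ((-1 : R) ^ i * k.choose i) • (g i - g (i + 1)) := by
  have hlast : ∑ i ∈ range (k + 2), ((-1 : R) ^ i * k.choose i) • g i =
      ∑ i ∈ range (k + 1), ((-1 : R) ^ i * k.choose i) • g i := by
    simp [sum_range_succ _ (k + 1)]
  rw [sum_range_succ'] at hlast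
  simp only [smul_sub, sum_sub_distrib]
  rw [sum_range_succ', ← hlast]
  simp only [Nat.choose_succ_succ, Nat.cast_add, mul_add, add_smul, sum_add_distrib, pow_succ,
    mul_neg_one, neg_mul, neg_smul, sum_neg_distrib, Nat.choose_zero_right]
  abel

variable {K : Type*} [Field K] [CharZero K]

theorem sum_range_neg_one_pow_div_factorial_mul_factorial (t : ℕ) :
    ∑ k ∈ range (t + 1), (-1 : K) ^ k / ((k + 1)! * (t - k)!) = 1 / (t + 1)! := by
  have h := Int.alternating_sum_range_choose_of_ne t.succ_ne_zero
  rw [sum_range_succ'] at h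
  simp only [pow_succ, mul_neg_one, neg_mul, sum_neg_distrib, pow_zero, Nat.choose_zero_right,
    Nat.cast_one, one_mul, neg_add_eq_zero] at h
  have hchoose : ∑ k ∈ range (t + 1), (-1 : K) ^ k * (t + 1).choose (k + 1) = 1 := by
    exact_mod_cast h
  conv_rhs => rw [← hchoose, sum_div]
  refine sum_congr rfl fun k hk => ?_
  rw [Nat.cast_choose K (by simp at hk; omega : k + 1 ≤ t + 1),
    show t + 1 - (k + 1) = t - k by omega]
  have : ((t + 1)! : K) ≠ 0 := by exact_mod_cast (t + 1).factorial_ne_zero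
  field_simp

theorem sum_range_neg_one_pow_mul_choose_div (k s : ℕ) :
    ∑ i ∈ range (k + 1), (-1 : K) ^ i * k.choose i / (s + i + 1) = s ! * k ! / (s + k + 1)! := by
  induction k generalizing s with
  | zero =>
    have : (s ! : K) ≠ 0 := by exact_mod_cast s.factorial_ne_zero
    simp [Nat.factorial_succ]
    field_simp
  | succ k ih =>
    have hpascal := sum_range_neg_one_pow_mul_choose_succ (R := K) (fun i => ((s : K) + i + 1)⁻¹) k
    simp only [smul_eq_mul, ← div_eq_mul_inv, mul_sub, sum_sub_distrib] at hpascal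
    have hshift : ∑ i ∈ range (k + 1), (-1 : K) ^ i * k.choose i / (s + (i + 1 : ℕ) + 1) =
        ∑ i ∈ range (k + 1), (-1 : K) ^ i * k.choose i / ((s + 1 : ℕ) + i + 1) :=
      sum_congr rfl fun i _ => by push_cast; ring
    rw [hpascal, hshift, ih, ih, show s + 1 + k + 1 = s + k + 1 + 1 by ring,
      show s + (k + 1) + 1 = s + k + 1 + 1 by ring]
    rw [Nat.factorial_succ (s + k + 1), Nat.factorial_succ s, Nat.factorial_succ k]
    have hF : ((s + k + 1)! : K) ≠ 0 := by exact_mod_cast (s + k + 1).factorial_ne_zero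
    have hN : ((s + k + 1 + 1 : ℕ) : K) ≠ 0 := by exact_mod_cast (s + k + 1).succ_ne_zero
    push_cast at hN ⊢
    field_simp
    ring

theorem sum_range_neg_one_pow_mul_choose_mul_descFactorial_div (k s : ℕ) :
    ∑ i ∈ range (k + 1), (-1 : K) ^ i * k.choose i * (s + i).descFactorial i / (s + i + 1)! =
      k ! / (s + k + 1)! := by
  have hs : (s ! : K) ≠ 0 := by exact_mod_cast s.factorial_ne_zero
  rw [← mul_div_cancel_left₀ (k ! / (s + k + 1)! : K) hs, ← mul_div_assoc,
    ← sum_range_neg_one_pow_mul_choose_div, sum_div]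
  refine sum_congr rfl fun i _ => ?_
  have hdesc : (s ! : K) * (s + i).descFactorial i = (s + i)! := by
    exact_mod_cast (show s + i - i = s by omega) ▸
      Nat.factorial_mul_descFactorial (by omega : i ≤ s + i)
  have hsucc : ((s + i + 1)! : K) = (s + i + 1) * (s + i)! := by
    push_cast [Nat.factorial_succ]; ring
  have hi : ((s + i)! : K) ≠ 0 := by exact_mod_cast (s + i).factorial_ne_zero
  have hi' : ((s : K) + i + 1) ≠ 0 := by exact_mod_cast (s + i).succ_ne_zero
  rw [hsucc, ← hdesc]
  field_simp

end Combinatorics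

section FiniteSums

variable {M : Type*} [AddCommMonoid M]

theorem finsum_eq_sum_range_of_forall_ge {F : ℕ → M} {N : ℕ} (h : ∀ j ≥ N, F j = 0) :
    ∑ᶠ j, F j = ∑ j ∈ range N, F j :=
  finsum_eq_sum_of_support_subset F fun j hj => by
    simpa using not_le.1 (mt (h j) hj)

theorem sum_range_eq_sum_range_add {F : ℕ → M} {i R : ℕ} (h₀ : ∀ m < i, F m = 0)
    (hge : ∀ m ≥ R, F m = 0) : ∑ m ∈ range R, F m = ∑ s ∈ range R, F (s + i) := by
  have hext : ∑ m ∈ range R, F m = ∑ m ∈ range (i + R), F m :=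
    sum_subset (range_subset_range.2 (by omega)) fun m _ hm => hge m (by simpa using hm)
  rw [hext, sum_range_add, sum_eq_zero fun m hm => h₀ m (by simpa using hm), zero_add]
  simp only [add_comm i]

theorem sum_range_sum_range_eq_sum_range_sum_range_succ {F : ℕ → ℕ → M} {R : ℕ}
    (h : ∀ k n, R ≤ k + n → F k n = 0) :
    ∑ k ∈ range R, ∑ n ∈ range R, F k n = ∑ t ∈ range R, ∑ k ∈ range (t + 1), F k (t - k) := by
  rw [sum_range_diag_flip]
  refine sum_congr rfl fun k hk => (sum_subset (range_subset_range.2 (by omega)) ?_).symm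
  intro n _ hn
  exact h k n (by simp at hk hn; omega)

theorem sum_range_sum_range_sum_choose_eq {F : ℕ → ℕ → M} {R : ℕ}
    (h : ∀ j t, R ≤ j + t → F j t = 0) :
    ∑ n ∈ range R, ∑ m ∈ range R, ∑ j ∈ range (m + 1), m.choose j • F j (m + n - j) =
      ∑ j ∈ range R, ∑ t ∈ range R, (t + j + 1).choose (j + 1) • F j t := by
  have hsplit : ∀ n, ∑ m ∈ range R, ∑ j ∈ range (m + 1), m.choose j • F j (m + n - j) =
      ∑ j ∈ range R, ∑ k ∈ range R, (j + k).choose j • F j (k + n) := by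
    intro n
    calc _ = ∑ m ∈ range R, ∑ j ∈ range (m + 1), (j + (m - j)).choose j • F j (m - j + n) :=
          sum_congr rfl fun m _ => sum_congr rfl fun j hj => by
            rw [mem_range] at hj
            rw [Nat.add_sub_cancel' (by omega), Nat.sub_add_comm (by omega)]
      _ = ∑ j ∈ range R, ∑ k ∈ range (R - j), (j + k).choose j • F j (k + n) :=
          sum_range_diag_flip R fun j k => (j + k).choose j • F j (k + n)
      _ = _ := sum_congr rfl fun j hj => sum_subset (range_subset_range.2 (by omega))
          fun k _ hk => by rw [h j (k + n) (by simp at hj hk; omega), smul_zero]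
  rw [sum_congr rfl fun n _ => hsplit n, sum_comm]
  refine sum_congr rfl fun j _ => ?_
  rw [sum_comm, sum_range_sum_range_eq_sum_range_sum_range_succ fun k n hkn => by
    rw [h j (k + n) (by omega), smul_zero]]
  refine sum_congr rfl fun t _ => ?_
  rw [← Nat.sum_range_add_choose, sum_smul]
  refine sum_congr rfl fun k hk => ?_
  rw [Nat.add_sub_cancel' (by simpa [Nat.lt_succ_iff] using hk), add_comm j k]

end FiniteSums

theorem Module.End.pow_add_apply {R M : Type*} [Semiring R] [AddCommMonoid M] [Module R M]
    (f : Module.End R M) (a b : ℕ) (v : M) : (f ^ (a + b)) v = (f ^ a) ((f ^ b) v) := by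
  rw [pow_add, Module.End.mul_apply]

theorem LinearMap.compLeft_pow_apply {R M ι : Type*} [Semiring R] [AddCommMonoid M] [Module R M]
    (f : Module.End R M) (k : ℕ) (u : ι → M) (i : ι) :
    ((f.compLeft ι) ^ k) u i = (f ^ k) (u i) := by
  induction k generalizing u with
  | zero => simp
  | succ k ih => rw [pow_succ, Module.End.mul_apply, ih, pow_succ, Module.End.mul_apply]; rfl

theorem Filter.eventually_forall_le_add_imp {W : Type*} [Zero W] {u : ℕ → ℕ → W}
    (h₁ : ∀ᶠ j in atTop, ∀ t, u j t = 0) (h₂ : ∀ᶠ t in atTop, ∀ j, u j t = 0) (k : ℕ) :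
    ∀ᶠ R in atTop, ∀ j t, R ≤ j + t + k → u j t = 0 := by
  obtain ⟨B₁, hB₁⟩ := eventually_atTop.1 h₁
  obtain ⟨B₂, hB₂⟩ := eventually_atTop.1 h₂
  filter_upwards [eventually_ge_atTop (B₁ + B₂ + k)] with R hR j t hjt
  by_cases hj : B₁ ≤ j
  · exact hB₁ j hj t
  · exact hB₂ t (by omega) j

theorem Filter.eventually_forall_apply_eq_zero {W W' : Type*} [Zero W] [Zero W']
    {q : ℕ → W → W'} (hq₀ : ∀ s, q s 0 = 0) (hq : ∀ w, ∀ᶠ s in atTop, q s w = 0)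
    {u : ℕ → W} (hu : ∀ᶠ n in atTop, u n = 0) : ∀ᶠ s in atTop, ∀ n, q s (u n) = 0 := by
  obtain ⟨N, hN⟩ := eventually_atTop.1 hu
  filter_upwards [(eventually_all_finset (range N)).2 fun n _ => hq (u n)] with s hs n
  by_cases hn : n < N
  · exact hs n (mem_range.2 hn)
  · rw [hN n (by omega), hq₀]

namespace LieConformal

section Sesquilinear

variable {K V : Type*} [CommRing K] [AddCommGroup V] [Module K V]

variable (K V) in
/-- Multiplication by `λ`, reading `u` as the divided-power series `∑ₘ λ^m/m! · u m`. -/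
def lambdaMul : Module.End K (ℕ → V) where
  toFun u m := (m : K) • u (m - 1)
  map_add' u v := by ext; simp
  map_smul' c u := by ext; simp [smul_comm c]

@[simp]
theorem lambdaMul_apply (u : ℕ → V) (m : ℕ) : lambdaMul K V u m = (m : K) • u (m - 1) := rfl

theorem lambdaMul_pow_apply (i : ℕ) (u : ℕ → V) (m : ℕ) :
    (lambdaMul K V ^ i) u m = (m.descFactorial i : K) • u (m - i) := by
  induction i generalizing m with
  | zero => simp
  | succ i ih =>
    rw [pow_succ', Module.End.mul_apply, lambdaMul_apply, ih, smul_smul]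
    cases m with
    | zero => simp
    | succ m =>
      rw [Nat.succ_descFactorial_succ, Nat.add_sub_cancel, Nat.add_sub_add_right, Nat.cast_mul,
        Nat.cast_succ]

theorem commute_lambdaMul_compLeft (T : Module.End K V) :
    Commute (lambdaMul K V) (T.compLeft ℕ) := by
  ext u m
  simp [lambdaMul]

variable (T : Module.End K V) (p : ℕ → V →ₗ[K] V →ₗ[K] V)

/- With `T = -∂` and `[a_λ b] = ∑ₘ λ^m/m! · p m a b`, these say `[T a_λ b] = λ [a_λ b]` and
`[a_λ T b] = (T - λ) [a_λ b]`. -/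
def IsLeftSesquilinear : Prop :=
  ∀ f g, (fun m => p m (T f) g) = lambdaMul K V (fun m => p m f g)

def IsRightSesquilinear : Prop :=
  ∀ f g, (fun m => p m f (T g)) = (T.compLeft ℕ - lambdaMul K V) (fun m => p m f g)

variable {T p}

theorem IsLeftSesquilinear.pow_apply (h : IsLeftSesquilinear T p) (k m : ℕ) (f g : V) :
    p m ((T ^ k) f) g = (m.descFactorial k : K) • p (m - k) f g := by
  suffices hseq : (fun m => p m ((T ^ k) f) g) = (lambdaMul K V ^ k) (fun m => p m f g) by
    rw [congrFun hseq m, lambdaMul_pow_apply]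
  induction k generalizing f with
  | zero => rfl
  | succ k ih => rw [pow_succ, Module.End.mul_apply, ih, h, pow_succ, Module.End.mul_apply]

theorem IsRightSesquilinear.pow_apply (h : IsRightSesquilinear T p) (k m : ℕ) (f g : V) :
    p m f ((T ^ k) g) = ∑ i ∈ range (k + 1),
      ((-1 : K) ^ i * k.choose i * m.descFactorial i) • (T ^ (k - i)) (p (m - i) f g) := by
  have hseq : (fun m => p m f ((T ^ k) g)) =
      ((T.compLeft ℕ - lambdaMul K V) ^ k) (fun m => p m f g) := by
    induction k generalizing g with
    | zero => rfl
    | succ k ih => rw [pow_succ, Module.End.mul_apply, ih, h, pow_succ, Module.End.mul_apply]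
  rw [congrFun hseq m, sub_eq_neg_add,
    ((commute_lambdaMul_compLeft T).neg_left).add_pow, LinearMap.sum_apply, Finset.sum_apply]
  refine sum_congr rfl fun i _ => ?_
  rw [← neg_one_smul K (lambdaMul K V), smul_pow]
  simp only [Module.End.mul_apply, LinearMap.smul_apply, Module.End.natCast_apply, Pi.smul_apply,
    lambdaMul_pow_apply, LinearMap.compLeft_pow_apply, map_nsmul, smul_smul]
  rw [← Nat.cast_smul_eq_nsmul K, smul_smul]
  congr 1
  ring

end Sesquilinear

section Bracket

variable {K V : Type*} [Field K] [AddCommGroup V] [Module K V]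
  (T : Module.End K V) (p : ℕ → V →ₗ[K] V →ₗ[K] V)

/-- `∫_{-∂}^0 [a_λ b] dλ`, for `T = -∂`. -/
noncomputable def bracket (a b : V) : V :=
  -∑ᶠ j : ℕ, ((j + 1)! : K)⁻¹ • (T ^ (j + 1)) (p j a b)

noncomputable def truncBracket (N : ℕ) : V →ₗ[K] V →ₗ[K] V :=
  -∑ j ∈ range N, ((j + 1)! : K)⁻¹ • (p j).compr₂ (T ^ (j + 1))

variable {T p}

theorem bracket_eq_sum_range {a b : V} {N : ℕ} (h : ∀ j ≥ N, p j a b = 0) :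
    bracket T p a b = -∑ j ∈ range N, ((j + 1)! : K)⁻¹ • (T ^ (j + 1)) (p j a b) := by
  rw [bracket, finsum_eq_sum_range_of_forall_ge fun j hj => by rw [h j hj, map_zero, smul_zero]]

theorem eventually_bracket_eq_truncBracket {a b : V} (h : ∀ᶠ j in atTop, p j a b = 0) :
    ∀ᶠ N in atTop, bracket T p a b = truncBracket T p N a b := by
  filter_upwards [eventually_forall_ge_atTop.2 h] with N hN
  simp [bracket_eq_sum_range hN, truncBracket]

theorem bracket_add_left (hfin : ∀ f g : V, ∀ᶠ j in atTop, p j f g = 0) (a b c : V) :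
    bracket T p (a + b) c = bracket T p a c + bracket T p b c := by
  obtain ⟨N, h₁, h₂, h₃⟩ := (eventually_bracket_eq_truncBracket (hfin (a + b) c)).and
    ((eventually_bracket_eq_truncBracket (hfin a c)).and
      (eventually_bracket_eq_truncBracket (hfin b c))) |>.exists
  rw [h₁, h₂, h₃, map_add, LinearMap.add_apply]

theorem bracket_add_right (hfin : ∀ f g : V, ∀ᶠ j in atTop, p j f g = 0) (a b c : V) :
    bracket T p a (b + c) = bracket T p a b + bracket T p a c := by
  obtain ⟨N, h₁, h₂, h₃⟩ := (eventually_bracket_eq_truncBracket (hfin a (b + c))).and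
    ((eventually_bracket_eq_truncBracket (hfin a b)).and
      (eventually_bracket_eq_truncBracket (hfin a c))) |>.exists
  rw [h₁, h₂, h₃, map_add]

theorem bracket_smul_left (hfin : ∀ f g : V, ∀ᶠ j in atTop, p j f g = 0) (r : K) (a b : V) :
    bracket T p (r • a) b = r • bracket T p a b := by
  obtain ⟨N, h₁, h₂⟩ := (eventually_bracket_eq_truncBracket (hfin (r • a) b)).and
    (eventually_bracket_eq_truncBracket (hfin a b)) |>.exists
  rw [h₁, h₂, map_smul, LinearMap.smul_apply]

theorem bracket_smul_right (hfin : ∀ f g : V, ∀ᶠ j in atTop, p j f g = 0) (r : K) (a b : V) :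
    bracket T p a (r • b) = r • bracket T p a b := by
  obtain ⟨N, h₁, h₂⟩ := (eventually_bracket_eq_truncBracket (hfin a (r • b))).and
    (eventually_bracket_eq_truncBracket (hfin a b)) |>.exists
  rw [h₁, h₂, map_smul]

variable [CharZero K]

theorem bracket_skew (hfin : ∀ f g : V, ∀ᶠ j in atTop, p j f g = 0)
    (hskew : ∀ (f g : V) (j : ℕ), p j f g =
      -((-1 : K) ^ j) • ∑ᶠ i : ℕ, ((i ! : K)⁻¹) • (T ^ i) (p (j + i) g f))
    (a b : V) : bracket T p a b = -bracket T p b a := by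
  obtain ⟨N, hN⟩ := eventually_atTop.1 ((hfin a b).and (hfin b a))
  have hba : ∀ j ≥ N, p j b a = 0 := fun j hj => (hN j hj).2
  rw [bracket_eq_sum_range fun j hj => (hN j hj).1, bracket_eq_sum_range hba, neg_neg]
  have hexpand : ∀ j ∈ range N, ((j + 1)! : K)⁻¹ • (T ^ (j + 1)) (p j a b) =
      -∑ i ∈ range N, ((-1 : K) ^ j * ((j + 1)! : K)⁻¹ * (i ! : K)⁻¹) •
        (T ^ (j + i + 1)) (p (j + i) b a) := by
    intro j _
    rw [hskew, finsum_eq_sum_range_of_forall_ge (N := N) fun i hi => by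
      rw [hba (j + i) (by omega), map_zero, smul_zero]]
    simp only [map_smul, map_sum, smul_sum, ← sum_neg_distrib, smul_smul,
      ← Module.End.pow_add_apply]
    refine sum_congr rfl fun i _ => ?_
    rw [← neg_smul, add_right_comm]
    congr 1
    ring
  rw [sum_congr rfl hexpand, sum_neg_distrib, neg_neg,
    sum_range_sum_range_eq_sum_range_sum_range_succ fun j i hji => by
      rw [hba (j + i) hji, map_zero, smul_zero]]
  refine sum_congr rfl fun t _ => ?_
  rw [sum_congr rfl fun k hk => by rw [Nat.add_sub_cancel' (by simpa [Nat.lt_succ_iff] using hk)],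
    ← sum_smul]
  congr 1
  rw [← one_div, ← sum_range_neg_one_pow_div_factorial_mul_factorial]
  exact sum_congr rfl fun k _ => by ring

theorem eventually_bracket_bracket_eq_sum (hfin : ∀ f g : V, ∀ᶠ j in atTop, p j f g = 0)
    (hright : IsRightSesquilinear T p) (x y z : V) :
    ∀ᶠ R in atTop, bracket T p x (bracket T p y z) =
      ∑ n ∈ range R, ∑ s ∈ range R, ((s + n + 2)! : K)⁻¹ • (T ^ (s + n + 2)) (p s x (p n y z)) := by
  have hvanish := eventually_forall_le_add_imp (u := fun s n => p s x (p n y z))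
    (eventually_forall_apply_eq_zero (fun s => map_zero (p s x)) (hfin x) (hfin y z))
    ((hfin y z).mono fun n hn s => by simp only [hn, map_zero]) 1
  filter_upwards [hvanish, eventually_forall_ge_atTop.2 (hfin y z),
    eventually_forall_ge_atTop.2 (hfin x (bracket T p y z))] with R hv hyz hxw
  rw [bracket_eq_sum_range hxw, bracket_eq_sum_range hyz]
  have hexpand : ∀ m ∈ range R, ((m + 1)! : K)⁻¹ • (T ^ (m + 1))
      (p m x (-∑ n ∈ range R, ((n + 1)! : K)⁻¹ • (T ^ (n + 1)) (p n y z))) =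
      -∑ n ∈ range R, ∑ i ∈ range (n + 2), (((m + 1)! : K)⁻¹ * (((n + 1)! : K)⁻¹ *
        ((-1 : K) ^ i * (n + 1).choose i * m.descFactorial i))) •
          (T ^ (m + 1 + (n + 1 - i))) (p (m - i) x (p n y z)) := by
    intro m _
    simp only [map_neg, map_sum, map_smul, hright.pow_apply, smul_neg, smul_sum, smul_smul,
      ← Module.End.pow_add_apply]
  rw [sum_congr rfl hexpand, sum_neg_distrib, neg_neg, sum_comm]
  refine sum_congr rfl fun n _ => ?_
  rw [sum_comm, sum_congr rfl fun i hi => sum_range_eq_sum_range_add (i := i)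
    (fun m hm => by rw [Nat.descFactorial_eq_zero_iff_lt.2 hm]; simp)
    (fun m hm => by rw [hv (m - i) n (by simp at hi; omega), map_zero, smul_zero]), sum_comm]
  refine sum_congr rfl fun s _ => ?_
  rw [sum_congr rfl fun i hi => by
    rw [Nat.add_sub_cancel, show s + i + 1 + (n + 1 - i) = s + n + 2 by simp at hi; omega],
    ← sum_smul]
  congr 1
  have hn : ((n + 1)! : K) ≠ 0 := by exact_mod_cast (n + 1).factorial_ne_zero
  calc _ = ((n + 1)! : K)⁻¹ * ∑ i ∈ range (n + 1 + 1),
        (-1 : K) ^ i * (n + 1).choose i * (s + i).descFactorial i / (s + i + 1)! := by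
        rw [mul_sum]
        exact sum_congr rfl fun i _ => by ring
    _ = _ := by
      rw [sum_range_neg_one_pow_mul_choose_mul_descFactorial_div,
        show s + (n + 1) + 1 = s + n + 2 by ring]
      field_simp

theorem eventually_bracket_bracket_left_eq_sum (hfin : ∀ f g : V, ∀ᶠ j in atTop, p j f g = 0)
    (hleft : IsLeftSesquilinear T p) (x y z : V) :
    ∀ᶠ R in atTop, bracket T p (bracket T p x y) z =
      ∑ m ∈ range R, ∑ t ∈ range R, (t + m + 1).choose (m + 1) •
        ((t + m + 2)! : K)⁻¹ • (T ^ (t + m + 2)) (p t (p m x y) z) := by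
  have hvanish := eventually_forall_le_add_imp (u := fun m t => p t (p m x y) z)
    ((hfin x y).mono fun m hm t => by simp only [hm, map_zero, LinearMap.zero_apply])
    (eventually_forall_apply_eq_zero (q := fun t w => p t w z) (fun t => by simp)
      (fun w => hfin w z) (hfin x y)) 1
  filter_upwards [hvanish, eventually_forall_ge_atTop.2 (hfin x y),
    eventually_forall_ge_atTop.2 (hfin (bracket T p x y) z)] with R hv hxy hwz
  rw [bracket_eq_sum_range hwz, bracket_eq_sum_range hxy]
  have hexpand : ∀ n ∈ range R, ((n + 1)! : K)⁻¹ • (T ^ (n + 1))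
      (p n (-∑ m ∈ range R, ((m + 1)! : K)⁻¹ • (T ^ (m + 1)) (p m x y)) z) =
      -∑ m ∈ range R, (((n + 1)! : K)⁻¹ * (((m + 1)! : K)⁻¹ * n.descFactorial (m + 1))) •
          (T ^ (n + 1)) (p (n - (m + 1)) (p m x y) z) := by
    intro n _
    simp only [map_neg, LinearMap.neg_apply, map_sum, LinearMap.sum_apply, map_smul,
      LinearMap.smul_apply, hleft.pow_apply, smul_neg, smul_sum, smul_smul]
  rw [sum_congr rfl hexpand, sum_neg_distrib, neg_neg, sum_comm]
  refine sum_congr rfl fun m _ => ?_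
  rw [sum_range_eq_sum_range_add (i := m + 1)
    (fun n hn => by rw [Nat.descFactorial_eq_zero_iff_lt.2 hn]; simp)
    (fun n hn => by rw [hv m (n - (m + 1)) (by omega), map_zero, smul_zero])]
  refine sum_congr rfl fun t _ => ?_
  rw [Nat.add_sub_cancel, show t + (m + 1) + 1 = t + m + 2 by ring, ← Nat.cast_smul_eq_nsmul K,
    smul_smul]
  congr 1
  have hm : ((m + 1)! : K) ≠ 0 := by exact_mod_cast (m + 1).factorial_ne_zero
  rw [Nat.descFactorial_eq_factorial_mul_choose, show t + (m + 1) = t + m + 1 by ring]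
  push_cast
  field_simp

theorem bracket_jacobi (hfin : ∀ f g : V, ∀ᶠ j in atTop, p j f g = 0)
    (hleft : IsLeftSesquilinear T p) (hright : IsRightSesquilinear T p)
    (hjac : ∀ (f g h : V) (m n : ℕ), p m f (p n g h) =
      (∑ j ∈ range (m + 1), m.choose j • p (m + n - j) (p j f g) h) + p n g (p m f h))
    (a b c : V) :
    bracket T p a (bracket T p b c) =
      bracket T p (bracket T p a b) c + bracket T p b (bracket T p a c) := by
  have hvanish := eventually_forall_le_add_imp (u := fun j t => p t (p j a b) c)
    ((hfin a b).mono fun j hj t => by simp only [hj, map_zero, LinearMap.zero_apply])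
    (eventually_forall_apply_eq_zero (q := fun t w => p t w c) (fun t => by simp)
      (fun w => hfin w c) (hfin a b)) 0
  obtain ⟨R, hv, habc, habc', hbac⟩ := (hvanish.and
    ((eventually_bracket_bracket_eq_sum hfin hright a b c).and
      ((eventually_bracket_bracket_left_eq_sum hfin hleft a b c).and
        (eventually_bracket_bracket_eq_sum hfin hright b a c)))).exists
  rw [habc, habc', hbac]
  simp only [hjac a b c, map_add, map_sum, map_nsmul, smul_add, smul_sum, sum_add_distrib]
  congr 1
  · rw [← sum_range_sum_range_sum_choose_eq (R := R)
      (F := fun j t => ((t + j + 2)! : K)⁻¹ • (T ^ (t + j + 2)) (p t (p j a b) c))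
      fun j t hjt => by rw [hv j t (by omega), map_zero, smul_zero]]
    refine sum_congr rfl fun n _ => sum_congr rfl fun s _ => sum_congr rfl fun j hj => ?_
    rw [smul_comm, Nat.sub_add_cancel (by simp at hj; omega)]
  · rw [sum_comm]
    exact sum_congr rfl fun n _ => sum_congr rfl fun s _ => by rw [add_comm n s]
end Bracket

end LieConformal

theorem stmt15
    (V : Type*) [AddCommGroup V] [Module ℝ V]
    (D : Module.End ℝ V)
    (p : ℕ → V →ₗ[ℝ] V →ₗ[ℝ] V)                  -- j-th products a_{(j)}b
    (hfin : ∀ f g : V, ∃ N, ∀ j ≥ N, p j f g = 0)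
    -- sesquilinearity:
    (hsesq0 : ∀ f g : V, p 0 (D f) g = 0)
    (hsesq1 : ∀ (f g : V) (j : ℕ),
      p (j + 1) (D f) g = -(((j : ℝ) + 1)) • p j f g)
    (hsesq2 : ∀ f g : V, p 0 f (D g) = D (p 0 f g))
    (hsesq2' : ∀ (f g : V) (j : ℕ),
      p (j + 1) f (D g) = D (p (j + 1) f g) + (((j : ℝ) + 1)) • p j f g)
    -- skew-symmetry [a_λ b] = −[b_{−∂−λ} a]:
    (hskew : ∀ (f g : V) (j : ℕ),
      p j f g = -((-1 : ℝ) ^ j) •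
        ∑ᶠ i : ℕ, ((i.factorial : ℝ)⁻¹) • ((-D) ^ i) (p (j + i) g f))
    -- Jacobi identity [a_λ [b_μ c]] = [b_μ [a_λ c]] + [[a_λ b]_{λ+μ} c]:
    (hjac : ∀ (f g h : V) (m n : ℕ),
      p m f (p n g h) =
        (∑ j ∈ Finset.range (m + 1), (m.choose j) • p (m + n - j) (p j f g) h)
          + p n g (p m f h)) :
    -- [a,b] := ∫_{−∂}^0 [a_λ b]dλ is a Lie bracket:
    (let br : V → V → V := fun a b =>
      - ∑ᶠ j : ℕ, (((j + 1).factorial : ℝ)⁻¹) • ((-D) ^ (j + 1)) (p j a b)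
     -- bilinearity:
     (∀ a b c : V, br (a + b) c = br a c + br b c) ∧
     (∀ a b c : V, br a (b + c) = br a b + br a c) ∧
     (∀ (r : ℝ) (a b : V), br (r • a) b = r • br a b) ∧
     (∀ (r : ℝ) (a b : V), br a (r • b) = r • br a b) ∧
     -- skew-symmetry:
     (∀ a b : V, br a b = - br b a) ∧
     -- Jacobi identity:
     (∀ a b c : V, br a (br b c) = br (br a b) c + br b (br a c))) := by
  have hfin' : ∀ f g : V, ∀ᶠ j in atTop, p j f g = 0 := fun f g => eventually_atTop.2 (hfin f g)
  have hleft : LieConformal.IsLeftSesquilinear (-D) p := fun f g => funext fun m => by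
    cases m with
    | zero => simp [hsesq0]
    | succ j =>
      simp only [LinearMap.neg_apply, map_neg, hsesq1, LieConformal.lambdaMul_apply, Nat.cast_succ,
        add_tsub_cancel_right]
      module
  have hright : LieConformal.IsRightSesquilinear (-D) p := fun f g => funext fun m => by
    cases m with
    | zero => simp [hsesq2]
    | succ j =>
      simp only [LinearMap.neg_apply, map_neg, hsesq2', LinearMap.sub_apply, Pi.sub_apply,
        LinearMap.compLeft_apply, Function.comp_apply, LieConformal.lambdaMul_apply, Nat.cast_succ,
        add_tsub_cancel_right]
      abel
  exact ⟨LieConformal.bracket_add_left hfin', LieConformal.bracket_add_right hfin',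
    LieConformal.bracket_smul_left hfin', LieConformal.bracket_smul_right hfin',
    LieConformal.bracket_skew hfin' hskew, LieConformal.bracket_jacobi hfin' hleft hright hjac⟩
end

section
/- Given a family of vertex algebras (V_ℏ, |0⟩, ∂, [·_λ·]_ℏ, : :_ℏ) over R[[ℏ]] with [V_ℏ λ V_ℏ] ⊆ ℏV_ℏ, the quasiclassical limit V = V_ℏ/ℏV_ℏ with induced product · and λ-bracket {a_λ b} := image of ℏ^{−1}[ã_λ b̃]_ℏ is a Poisson vertex algebra; in particular the induced product is commutative and associative, and the Wick formula becomes the Leibniz identity {a_λ bc} = {a_λ b}c + b{a_λ c}. -/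
/- STATEMENT 17: Given a family of vertex algebras V_ℏ over ℝ[[ℏ]] with
[V_ℏ λ V_ℏ] ⊆ ℏV_ℏ, the quasiclassical limit V = V_ℏ/ℏV_ℏ is a Poisson vertex
algebra: the induced product is commutative and associative, and the
non-commutative Wick formula becomes the left Leibniz identity
{a_λ bc} = {a_λ b}c + b{a_λ c}.
Here ℝ[[ℏ]] = PowerSeries ℝ with ℏ = X; the λ-bracket is encoded by its j-th
products p, and {a_λ b} on the quotient is the class of ℏ⁻¹[ã_λ b̃]_ℏ. -/

theorem stmt17
    (V : Type*) [AddCommGroup V] [Module (PowerSeries ℝ) V]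
    [Module ℝ V] [IsScalarTower ℝ (PowerSeries ℝ) V]
    (vac : V)                                    -- the vacuum |0⟩
    (m : V → V → V)                              -- normally ordered product : :_ℏ
    (D : V →ₗ[PowerSeries ℝ] V)                  -- the derivation ∂
    (p : ℕ → V →ₗ[PowerSeries ℝ] V →ₗ[PowerSeries ℝ] V)  -- j-th products of [·_λ·]_ℏ
    (hfin : ∀ a b : V, ∃ N, ∀ j ≥ N, p j a b = 0)
    -- the product is ℝ[[ℏ]]-bilinear and unital:
    (hmaddl : ∀ a b c : V, m (a + b) c = m a c + m b c)
    (hmaddr : ∀ a b c : V, m a (b + c) = m a b + m a c)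
    (hmsmull : ∀ (r : PowerSeries ℝ) (a b : V), m (r • a) b = r • m a b)
    (hmsmulr : ∀ (r : PowerSeries ℝ) (a b : V), m a (r • b) = r • m a b)
    (hunitl : ∀ a : V, m vac a = a) (hunitr : ∀ a : V, m a vac = a)
    -- Lie conformal algebra axioms for [·_λ·]_ℏ (coefficient-wise):
    (hsesq0 : ∀ a b : V, p 0 (D a) b = 0)
    (hsesq1 : ∀ (a b : V) (j : ℕ),
      p (j + 1) (D a) b = -(((j : ℝ) + 1)) • p j a b)
    (hskew : ∀ (a b : V) (j : ℕ),
      p j a b = -((-1 : ℝ) ^ j) •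
        ∑ᶠ i : ℕ, ((i.factorial : ℝ)⁻¹) •
          ((-(D : Module.End (PowerSeries ℝ) V)) ^ i) (p (j + i) b a))
    (hjac : ∀ (a b c : V) (m' n : ℕ),
      p m' a (p n b c) =
        (∑ j ∈ Finset.range (m' + 1), (m'.choose j) • p (m' + n - j) (p j a b) c)
          + p n b (p m' a c))
    -- strong quasi-commutativity :a:bc:: − :b:ac:: = :(∫_{−∂}^0[a_λ b]dλ)c: :
    (hqcomm : ∀ a b c : V,
      m a (m b c) - m b (m a c) =
        m (- ∑ᶠ j : ℕ, (((j + 1).factorial : ℝ)⁻¹) •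
              ((-(D : Module.End (PowerSeries ℝ) V)) ^ (j + 1)) (p j a b)) c)
    -- non-commutative Wick formula [a_λ :bc:] = :[a_λ b]c: + :b[a_λ c]: + ∫_0^λ[[a_λ b]_μ c]dμ,
    -- coefficient-wise:
    (hwick : ∀ (a b c : V) (n : ℕ),
      p n a (m b c) =
        m (p n a b) c + m b (p n a c)
          + ∑ j ∈ Finset.range n, (n.choose j) • p (n - 1 - j) (p j a b) c)
    -- [V_ℏ λ V_ℏ] ⊆ ℏV_ℏ:
    (hbr : ∀ (j : ℕ) (a b : V), ∃ c, p j a b = (PowerSeries.X : PowerSeries ℝ) • c)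
    -- V_ℏ is a free ℝ[[ℏ]]-module; in particular multiplication by ℏ is injective:
    (htf : ∀ v : V, (PowerSeries.X : PowerSeries ℝ) • v = 0 → v = 0) :
    -- the quasiclassical limit V/ℏV is a Poisson vertex algebra:
    (let S : Submodule (PowerSeries ℝ) V :=
      LinearMap.range (LinearMap.lsmul (PowerSeries ℝ) V (PowerSeries.X))
     let mk : V → V ⧸ S := Submodule.Quotient.mk
     -- the induced product is commutative:
     (∀ a b : V, mk (m a b) = mk (m b a)) ∧
     -- the induced product is associative:
     (∀ a b c : V, mk (m (m a b) c) = mk (m a (m b c))) ∧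
     -- the Wick formula becomes the left Leibniz identity {a_λ bc} = {a_λ b}c + b{a_λ c}
     -- on the quotient, where {·_λ·} is the class of ℏ⁻¹[·_λ·]_ℏ:
     (∀ (j : ℕ) (a b c b' c' q : V),
        p j a b = (PowerSeries.X : PowerSeries ℝ) • b' →
        p j a c = (PowerSeries.X : PowerSeries ℝ) • c' →
        p j a (m b c) = (PowerSeries.X : PowerSeries ℝ) • q →
        mk q = mk (m b' c) + mk (m b c'))) := by
  intro S mk
  -- basic facts about S
  have hSmem : ∀ x : V, (PowerSeries.X : PowerSeries ℝ) • x ∈ S := by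
    intro x
    exact ⟨x, by simp [LinearMap.lsmul_apply]⟩
  have hSex : ∀ x : V, x ∈ S → ∃ v, x = (PowerSeries.X : PowerSeries ℝ) • v := by
    rintro x ⟨v, rfl⟩
    exact ⟨v, by simp [LinearMap.lsmul_apply]⟩
  have hpS : ∀ (j : ℕ) (a b : V), p j a b ∈ S := by
    intro j a b
    obtain ⟨c, hc⟩ := hbr j a b
    rw [hc]; exact hSmem c
  have hmlS : ∀ (v c : V), v ∈ S → m v c ∈ S := by
    intro v c hv
    obtain ⟨w, rfl⟩ := hSex v hv
    rw [hmsmull]; exact hSmem _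
  have hmrS : ∀ (a v : V), v ∈ S → m a v ∈ S := by
    intro a v hv
    obtain ⟨w, rfl⟩ := hSex v hv
    rw [hmsmulr]; exact hSmem _
  have hrS : ∀ (r : ℝ) (x : V), x ∈ S → r • x ∈ S := by
    intro r x hx
    rw [← algebraMap_smul (PowerSeries ℝ) r x]
    exact S.smul_mem _ hx
  have hDS : ∀ (i : ℕ) (x : V), x ∈ S →
      ((-(D : Module.End (PowerSeries ℝ) V)) ^ i) x ∈ S := by
    intro i x hx
    obtain ⟨w, rfl⟩ := hSex x hx
    rw [map_smul]; exact hSmem _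
  have hfinsum : ∀ f : ℕ → V, (∀ i, f i ∈ S) → (∑ᶠ i, f i) ∈ S := by
    intro f hf
    by_cases h : (Function.support f).Finite
    · rw [finsum_eq_sum f h]; exact S.sum_mem fun i _ => hf i
    · rw [finsum_of_infinite_support h]; exact S.zero_mem
  -- quotient congruence
  have hmk : ∀ x y : V, x - y ∈ S → mk x = mk y := by
    intro x y h
    exact (Submodule.Quotient.eq S).mpr h
  -- L_a L_b ≡ L_b L_a modulo S
  have key : ∀ a b c : V, m a (m b c) - m b (m a c) ∈ S := by
    intro a b c
    rw [hqcomm]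
    refine hmlS _ c (S.neg_mem (hfinsum _ fun j => hrS _ _ (hDS _ _ (hpS j a b))))
  have hsub : ∀ a b : V, m a b - m b a ∈ S := by
    intro a b
    simpa [hunitr] using key a b vac
  have hcomm : ∀ a b : V, mk (m a b) = mk (m b a) := fun a b => hmk _ _ (hsub a b)
  refine ⟨hcomm, ?_, ?_⟩
  · -- associativity
    intro a b c
    have hmr_sub : ∀ (a x y : V), m a (x - y) = m a x - m a y := by
      intro a x y
      have h1 := hmaddr a (x - y) y
      rw [sub_add_cancel] at h1
      rw [h1]; abel
    have hmr_cong : ∀ (a x y : V), x - y ∈ S → m a x - m a y ∈ S := by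
      intro a x y h
      rw [← hmr_sub]
      exact hmrS _ _ h
    refine hmk _ _ ?_
    have heq : m (m a b) c - m a (m b c) =
        (m (m a b) c - m c (m a b)) +
          ((m c (m a b) - m a (m c b)) + (m a (m c b) - m a (m b c))) := by abel
    rw [heq]
    exact S.add_mem (hsub (m a b) c)
      (S.add_mem (key c a b) (hmr_cong a _ _ (hsub c b)))
  · -- Leibniz identity
    intro n a b c b' c' q hb hc hq
    choose v hv using fun j => hbr j a b
    have hw := hwick a b c n
    rw [hq, hb, hc, hmsmull, hmsmulr] at hw
    have hsum : ∑ j ∈ Finset.range n, (n.choose j) • p (n - 1 - j) (p j a b) c =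
        (PowerSeries.X : PowerSeries ℝ) •
          ∑ j ∈ Finset.range n, (n.choose j) • p (n - 1 - j) (v j) c := by
      rw [Finset.smul_sum]
      refine Finset.sum_congr rfl fun j _ => ?_
      rw [hv j, map_smul, LinearMap.smul_apply, smul_comm]
    rw [hsum] at hw
    set t := ∑ j ∈ Finset.range n, (n.choose j) • p (n - 1 - j) (v j) c with ht
    have htS : t ∈ S := S.sum_mem fun j _ => nsmul_mem (hpS _ _ _) _
    have hqeq : q = m b' c + m b c' + t := by
      have h0 : (PowerSeries.X : PowerSeries ℝ) • (q - (m b' c + m b c' + t)) = 0 := by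
        rw [smul_sub, hw]; rw [smul_add, smul_add]; abel
      have h1 := htf _ h0
      exact sub_eq_zero.mp h1
    have : mk q = mk (m b' c + m b c') := by
      refine hmk _ _ ?_
      rw [hqeq]
      have : m b' c + m b c' + t - (m b' c + m b c') = t := by abel
      rw [this]; exact htS
    rw [this]
    exact Submodule.Quotient.mk_add S
end
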